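/- Let r, t ∈ ℝ^N with r ≠ 0, and suppose ‖r − t‖₂² ≤ ‖r‖₂². Define γ = 1 − ‖r − t‖₂²/‖r‖₂². Then γ ∈ [0, 1], and for every learning rate η with 0 < η ≤ 1, ‖r − η·t‖₂² ≤ (1 − η·γ)·‖r‖₂². In particular the squared residual norm strictly decreases whenever γ > 0. -/

import Mathlib

/-! Since `r - η • t = (1 - η) • r + η • (r - t)`, convexity of `‖·‖²` bounds `‖r - η • t‖²` by
`(1 - η) ‖r‖² + η ‖r - t‖²`, which is `(1 - η γ) ‖r‖²`. -/

theorem sq_norm_sub_smul_le {E : Type*} [SeminormedAddCommGroup E] [NormedSpace ℝ E]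
    (x y : E) {η : ℝ} (hη₀ : 0 ≤ η) (hη₁ : η ≤ 1) :
    ‖x - η • y‖ ^ 2 ≤ (1 - η) * ‖x‖ ^ 2 + η * ‖x - y‖ ^ 2 := by
  have hsplit : x - η • y = (1 - η) • x + η • (x - y) := by module
  have htriangle : ‖x - η • y‖ ≤ (1 - η) * ‖x‖ + η * ‖x - y‖ := by
    rw [hsplit]
    calc ‖(1 - η) • x + η • (x - y)‖ ≤ ‖(1 - η) • x‖ + ‖η • (x - y)‖ := norm_add_le _ _
      _ = (1 - η) * ‖x‖ + η * ‖x - y‖ := by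
        rw [norm_smul_of_nonneg (sub_nonneg.2 hη₁), norm_smul_of_nonneg hη₀]
  calc ‖x - η • y‖ ^ 2 ≤ ((1 - η) * ‖x‖ + η * ‖x - y‖) ^ 2 :=
        pow_le_pow_left₀ (norm_nonneg _) htriangle 2
    _ ≤ (1 - η) * ‖x‖ ^ 2 + η * ‖x - y‖ ^ 2 := by
        nlinarith [mul_nonneg (mul_nonneg hη₀ (sub_nonneg.2 hη₁)) (sq_nonneg (‖x‖ - ‖x - y‖))]

/-- **Stage-wise risk reduction.**
Let `r, t ∈ ℝᴺ` with `r ≠ 0` and `‖r − t‖² ≤ ‖r‖²`, and set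
`γ = 1 − ‖r − t‖²/‖r‖²`.  Then `γ ∈ [0,1]`, and for every learning rate `η ∈ (0,1]`,
`‖r − η·t‖² ≤ (1 − ηγ)‖r‖²`; in particular the squared residual norm strictly decreases
whenever `γ > 0`. -/
theorem stagewise_risk_reduction {N : ℕ}
    (r t : EuclideanSpace ℝ (Fin N)) (hr : r ≠ 0)
    (h : ‖r - t‖ ^ 2 ≤ ‖r‖ ^ 2) :
    (0 ≤ 1 - ‖r - t‖ ^ 2 / ‖r‖ ^ 2) ∧
    (1 - ‖r - t‖ ^ 2 / ‖r‖ ^ 2 ≤ 1) ∧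
    (∀ η : ℝ, 0 < η → η ≤ 1 →
      ‖r - η • t‖ ^ 2 ≤ (1 - η * (1 - ‖r - t‖ ^ 2 / ‖r‖ ^ 2)) * ‖r‖ ^ 2) ∧
    (0 < 1 - ‖r - t‖ ^ 2 / ‖r‖ ^ 2 →
      ∀ η : ℝ, 0 < η → η ≤ 1 → ‖r - η • t‖ ^ 2 < ‖r‖ ^ 2) := by
  have hr₂ : 0 < ‖r‖ ^ 2 := pow_pos (norm_pos_iff.2 hr) 2
  have hbound (η : ℝ) (hη₀ : 0 < η) (hη₁ : η ≤ 1) :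
      ‖r - η • t‖ ^ 2 ≤ (1 - η * (1 - ‖r - t‖ ^ 2 / ‖r‖ ^ 2)) * ‖r‖ ^ 2 :=
    calc ‖r - η • t‖ ^ 2 ≤ (1 - η) * ‖r‖ ^ 2 + η * ‖r - t‖ ^ 2 :=
          sq_norm_sub_smul_le r t hη₀.le hη₁
      _ = (1 - η * (1 - ‖r - t‖ ^ 2 / ‖r‖ ^ 2)) * ‖r‖ ^ 2 := by field_simp; ring
  refine ⟨sub_nonneg.2 ((div_le_one hr₂).2 h), sub_le_self _ (by positivity), hbound,
    fun hγ η hη₀ hη₁ => (hbound η hη₀ hη₁).trans_lt ?_⟩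
  nlinarith [mul_pos (mul_pos hη₀ hγ) hr₂]
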